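/- For natural numbers n, m with n ≥ m and any real r, the integral over ℝ of φ_n(x)·φ_m(2r−x) dx equals (1/√(2^{n+m} n! m!)) · e^{−r²} · ∑_{ℓ=0}^{m} (−2)^ℓ · ℓ! · binom(n,ℓ) · binom(m,ℓ) · (2r)^{n+m−2ℓ}, where φ_k(x) = H_k(x) e^{−x²/2} / (2^k k! √π)^{1/2} is the k-th Hermite function. -/

import Mathlib

open MeasureTheory

/-- The physicists' Hermite polynomials, via the standard recurrence
`H_{n+2}(x) = 2x H_{n+1}(x) - 2(n+1) H_n(x)` (equivalent to the generating
function `∑ H_k(x) t^k / k! = exp (2xt - t²)`). -/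
noncomputable def hermiteH : ℕ → ℝ → ℝ
  | 0, _ => 1
  | 1, x => 2 * x
  | (n + 2), x => 2 * x * hermiteH (n + 1) x - 2 * (n + 1) * hermiteH n x

/-- The `k`-th normalized Hermite function `φ_k(x) = (2^k k! √π)^{-1/2} H_k(x) e^{-x²/2}`. -/
noncomputable def phiH (k : ℕ) (x : ℝ) : ℝ :=
  hermiteH k x * Real.exp (-x ^ 2 / 2) /
    Real.sqrt (2 ^ k * (Nat.factorial k) * Real.sqrt Real.pi)

/-
Substituting `x = r + u` turns `φ_n(x) φ_m(2r - x)` into `e^{-r²} H_n(r + u) H_m(r - u) e^{-u²}`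
up to normalization. The addition formula `H_n(r + u) = ∑ C(n,k) (2r)^{n-k} H_k(u)` and the parity
of `H_m` expand both factors in the Hermite basis, and orthogonality
`∫ H_k H_j e^{-u²} = δ_{kj} 2^k k! √π` keeps only the diagonal terms.
-/

open Real Polynomial Finset Nat

@[simp] lemma hermiteH_zero : hermiteH 0 = fun _ => 1 := rfl

@[simp] lemma hermiteH_one : hermiteH 1 = fun x => 2 * x := rfl

lemma hermiteH_succ (n : ℕ) (x : ℝ) :
    hermiteH (n + 1) x = 2 * x * hermiteH n x - 2 * n * hermiteH (n - 1) x := by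
  cases n <;> simp [hermiteH]

lemma exists_eval_eq_hermiteH (n : ℕ) : ∃ p : ℝ[X], ∀ x, p.eval x = hermiteH n x := by
  induction n using Nat.twoStepInduction with
  | zero => exact ⟨1, by simp [hermiteH]⟩
  | one => exact ⟨C 2 * X, by simp [hermiteH]⟩
  | more n ihn ihn1 =>
    obtain ⟨p, hp⟩ := ihn
    obtain ⟨q, hq⟩ := ihn1
    exact ⟨C 2 * X * q - C (2 * (n + 1 : ℝ)) * p, fun x => by simp [hermiteH, hp, hq]⟩

lemma hermiteH_neg (n : ℕ) (x : ℝ) : hermiteH n (-x) = (-1) ^ n * hermiteH n x := by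
  induction n using Nat.twoStepInduction with
  | zero => simp [hermiteH]
  | one => simp [hermiteH]
  | more n ihn ihn1 => simp only [hermiteH, ihn, ihn1]; ring

lemma hasDerivAt_hermiteH (n : ℕ) (x : ℝ) :
    HasDerivAt (hermiteH n) (2 * n * hermiteH (n - 1) x) x := by
  induction n using Nat.twoStepInduction with
  | zero => simpa using hasDerivAt_const x (1 : ℝ)
  | one => simpa using (hasDerivAt_id x).const_mul (2 : ℝ)
  | more n ihn ihn1 =>
    have h := (((hasDerivAt_id x).const_mul 2).mul ihn1).sub (ihn.const_mul (2 * (n + 1 : ℝ)))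
    refine (h.congr_deriv ?_ :
      HasDerivAt (fun y => 2 * y * hermiteH (n + 1) y - 2 * (n + 1 : ℝ) * hermiteH n y) _ x)
    simp only [id, Nat.add_sub_cancel, show n + 2 - 1 = n + 1 from rfl]
    push_cast
    linear_combination -(2 * (n + 1 : ℝ)) * hermiteH_succ n x

lemma hasDerivAt_hermiteH_mul_gaussian (k : ℕ) (x : ℝ) :
    HasDerivAt (fun y => hermiteH k y * exp (-y ^ 2)) (-(hermiteH (k + 1) x * exp (-x ^ 2))) x := by
  have hg : HasDerivAt (fun y => exp (-y ^ 2)) (exp (-x ^ 2) * -(2 * x)) x := by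
    simpa using ((hasDerivAt_pow 2 x).neg).exp
  refine ((hasDerivAt_hermiteH k x).mul hg).congr_deriv ?_
  rw [hermiteH_succ]; ring

lemma integrable_eval_mul_gaussian (p : ℝ[X]) : Integrable fun x => p.eval x * exp (-x ^ 2) := by
  simp_rw [eval_eq_sum_range, Finset.sum_mul, mul_assoc]
  refine integrable_finsetSum _ fun i _ => Integrable.const_mul ?_ _
  simpa using integrable_rpow_mul_exp_neg_mul_sq one_pos (s := i)
    (by linarith [i.cast_nonneg (α := ℝ)])

lemma integrable_hermiteH_mul_hermiteH_mul_gaussian (k j : ℕ) :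
    Integrable fun x => hermiteH k x * hermiteH j x * exp (-x ^ 2) := by
  obtain ⟨p, hp⟩ := exists_eval_eq_hermiteH k
  obtain ⟨q, hq⟩ := exists_eval_eq_hermiteH j
  simpa [hp, hq] using integrable_eval_mul_gaussian (p * q)

lemma integral_hermiteH_succ_mul_hermiteH_mul_gaussian (k j : ℕ) :
    ∫ x, hermiteH (k + 1) x * hermiteH j x * exp (-x ^ 2)
      = 2 * j * ∫ x, hermiteH k x * hermiteH (j - 1) x * exp (-x ^ 2) := by
  -- integrate by parts against `(H_k e^{-x²})' = -H_{k+1} e^{-x²}`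
  have hparts := integral_mul_deriv_eq_deriv_mul_of_integrable
    (fun x _ => hasDerivAt_hermiteH j x) (fun x _ => hasDerivAt_hermiteH_mul_gaussian k x)
    ((integrable_hermiteH_mul_hermiteH_mul_gaussian (k + 1) j).neg.congr ?_)
    (((integrable_hermiteH_mul_hermiteH_mul_gaussian k (j - 1)).const_mul (2 * j)).congr ?_)
    ((integrable_hermiteH_mul_hermiteH_mul_gaussian k j).congr ?_)
  · simp only [mul_neg, integral_neg, neg_inj] at hparts
    rw [← integral_const_mul]
    convert hparts using 1 <;> congr 1 with x <;> ring
  all_goals exact .of_forall fun x => by simp only [Pi.mul_apply, Pi.neg_apply]; ring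

lemma integral_hermiteH_mul_hermiteH_mul_gaussian (k j : ℕ) :
    ∫ x, hermiteH k x * hermiteH j x * exp (-x ^ 2)
      = if k = j then 2 ^ k * k ! * √π else 0 := by
  induction k generalizing j with
  | zero =>
    cases j with
    | zero => simpa using integral_gaussian 1
    | succ j =>
      simp_rw [mul_comm (hermiteH 0 _), integral_hermiteH_succ_mul_hermiteH_mul_gaussian]
      simp
  | succ k ih =>
    cases j with
    | zero => rw [integral_hermiteH_succ_mul_hermiteH_mul_gaussian]; simp
    | succ j =>
      rw [integral_hermiteH_succ_mul_hermiteH_mul_gaussian, Nat.add_sub_cancel, ih]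
      by_cases h : k = j
      · subst h; push_cast [factorial_succ, pow_succ]; simp only [if_true]; ring
      · simp [h]

lemma integral_sum_hermiteH_mul_sum_hermiteH_mul_gaussian (s t : Finset ℕ) (a b : ℕ → ℝ) :
    ∫ x, (∑ k ∈ s, a k * hermiteH k x) * (∑ j ∈ t, b j * hermiteH j x) * exp (-x ^ 2)
      = ∑ k ∈ s ∩ t, a k * b k * (2 ^ k * k ! * √π) := by
  have hexpand : ∀ x,
      (∑ k ∈ s, a k * hermiteH k x) * (∑ j ∈ t, b j * hermiteH j x) * exp (-x ^ 2)
        = ∑ k ∈ s, ∑ j ∈ t, a k * b j * (hermiteH k x * hermiteH j x * exp (-x ^ 2)) := by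
    intro x
    simp_rw [sum_mul_sum, sum_mul]
    exact sum_congr rfl fun k _ => sum_congr rfl fun j _ => by ring
  have hint (k j : ℕ) := (integrable_hermiteH_mul_hermiteH_mul_gaussian k j).const_mul (a k * b j)
  simp_rw [hexpand]
  rw [integral_finsetSum _ fun k _ => integrable_finsetSum _ fun j _ => hint k j]
  simp_rw [integral_finsetSum _ fun j _ => hint _ j, integral_const_mul,
    integral_hermiteH_mul_hermiteH_mul_gaussian, mul_ite, mul_zero, sum_ite_eq, sum_ite_mem]

lemma eq_of_hasDerivAt_eq {F : Type*} [NormedAddCommGroup F] [NormedSpace ℝ F]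
    {f g f' : ℝ → F}
    (hf : ∀ x, HasDerivAt f (f' x) x) (hg : ∀ x, HasDerivAt g (f' x) x) (x₀ : ℝ)
    (h : f x₀ = g x₀) : f = g :=
  eq_of_fderiv_eq (fun x => (hf x).differentiableAt) (fun x => (hg x).differentiableAt)
    (fun x => by rw [(hf x).hasFDerivAt.fderiv, (hg x).hasFDerivAt.fderiv]) x₀ h

lemma hermiteH_add (n : ℕ) (a u : ℝ) :
    hermiteH n (a + u)
      = ∑ k ∈ range (n + 1), n.choose k * (2 * a) ^ (n - k) * hermiteH k u := by
  induction n generalizing a with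
  | zero => simp
  | succ n ih =>
    -- both sides have derivative `2 (n + 1) H_n (a + u)` in `a` and agree at `a = 0`
    have hterm (k : ℕ) (a : ℝ) :
        HasDerivAt (fun a => ((n + 1).choose k : ℝ) * (2 * a) ^ (n + 1 - k) * hermiteH k u)
          (2 * (n + 1) * (n.choose k * (2 * a) ^ (n - k) * hermiteH k u)) a := by
      refine (((((hasDerivAt_id a).const_mul 2).pow (n + 1 - k)).const_mul
        ((n + 1).choose k : ℝ)).mul_const (hermiteH k u)).congr_deriv ?_
      have hc : (n.choose k * (n + 1) : ℝ) = (n + 1).choose k * (n + 1 - k : ℕ) := by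
        exact_mod_cast Nat.choose_mul_succ_eq n k
      rw [show n + 1 - k - 1 = n - k by omega, id]
      linear_combination (-2 * (2 * a) ^ (n - k) * hermiteH k u) * hc
    revert a
    refine funext_iff.mp (eq_of_hasDerivAt_eq (f' := fun a => 2 * (n + 1) * hermiteH n (a + u))
      (fun a => ?_) (fun a => ?_) 0 ?_)
    · simpa using (hasDerivAt_hermiteH (n + 1) (a + u)).comp_add_const a u
    · have := HasDerivAt.fun_sum (u := range (n + 2)) fun k _ => hterm k a
      rw [sum_range_succ, Nat.choose_succ_self] at this
      simpa [ih, mul_sum] using this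
    · rw [sum_range_succ, sum_eq_zero fun k hk => ?_]
      · simp
      · simp [zero_pow (show n + 1 - k ≠ 0 by grind)]

lemma hermiteH_sub (n : ℕ) (a u : ℝ) :
    hermiteH n (a - u)
      = ∑ k ∈ range (n + 1), (-1) ^ k * n.choose k * (2 * a) ^ (n - k) * hermiteH k u := by
  rw [sub_eq_add_neg, hermiteH_add]
  exact sum_congr rfl fun k _ => by rw [hermiteH_neg]; ring

lemma integral_hermiteH_add_mul_hermiteH_sub_mul_gaussian (n m : ℕ) (r : ℝ) :
    ∫ u, hermiteH n (r + u) * hermiteH m (r - u) * exp (-u ^ 2)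
      = √π * ∑ l ∈ range (m + 1),
          (-2) ^ l * l ! * n.choose l * m.choose l * (2 * r) ^ (n + m - 2 * l) := by
  simp_rw [hermiteH_add n r, hermiteH_sub m r]
  rw [integral_sum_hermiteH_mul_sum_hermiteH_mul_gaussian, mul_sum,
    ← sum_subset (inter_subset_right (s₁ := range (n + 1)) (s₂ := range (m + 1)))
      fun l _ hl => ?_]
  · refine sum_congr rfl fun l hl => ?_
    obtain ⟨hln, hlm⟩ : l ≤ n ∧ l ≤ m := by simp only [mem_inter, mem_range] at hl; omega
    rw [show n + m - 2 * l = (n - l) + (m - l) by omega, pow_add, neg_pow 2]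
    ring
  · have : n < l := by simp_all
    simp [Nat.choose_eq_zero_of_lt this]

lemma phiH_add_mul_phiH_sub (n m : ℕ) (r u : ℝ) :
    phiH n (r + u) * phiH m (r - u)
      = exp (-r ^ 2) / (√(2 ^ n * n ! * √π) * √(2 ^ m * m ! * √π))
          * (hermiteH n (r + u) * hermiteH m (r - u) * exp (-u ^ 2)) := by
  have hexp : exp (-(r + u) ^ 2 / 2) * exp (-(r - u) ^ 2 / 2) = exp (-r ^ 2) * exp (-u ^ 2) := by
    rw [← exp_add, ← exp_add]; ring_nf
  simp only [phiH]
  calc _ = hermiteH n (r + u) * hermiteH m (r - u)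
        * (exp (-(r + u) ^ 2 / 2) * exp (-(r - u) ^ 2 / 2))
        / (√(2 ^ n * n ! * √π) * √(2 ^ m * m ! * √π)) := by ring
    _ = _ := by rw [hexp]; ring

theorem stmt3_general (n m : ℕ) (r : ℝ) :
    (∫ x : ℝ, phiH n x * phiH m (2 * r - x))
      = (1 / Real.sqrt (2 ^ (n + m) * (Nat.factorial n) * (Nat.factorial m))) *
          Real.exp (-r ^ 2) *
          ∑ l ∈ Finset.range (m + 1),
            (-2 : ℝ) ^ l * (Nat.factorial l) * (n.choose l) * (m.choose l) *
              (2 * r) ^ (n + m - 2 * l) := by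
  have hnorm :
      √(2 ^ n * n ! * √π) * √(2 ^ m * m ! * √π) = √(2 ^ (n + m) * n ! * m !) * √π := by
    rw [← sqrt_mul (by positivity), ← sqrt_mul (by positivity)]
    congr 1
    linear_combination (2 ^ (n + m) * n ! * m ! : ℝ) * mul_self_sqrt pi_pos.le
  rw [← integral_add_left_eq_self _ r]
  simp_rw [show ∀ u, 2 * r - (r + u) = r - u from fun u => by ring, phiH_add_mul_phiH_sub]
  rw [integral_const_mul, integral_hermiteH_add_mul_hermiteH_sub_mul_gaussian, hnorm]
  field_simp

theorem stmt3 (n m : ℕ) (h : m ≤ n) (r : ℝ) :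
    (∫ x : ℝ, phiH n x * phiH m (2 * r - x))
      = (1 / Real.sqrt (2 ^ (n + m) * (Nat.factorial n) * (Nat.factorial m))) *
          Real.exp (-r ^ 2) *
          ∑ l ∈ Finset.range (m + 1),
            (-2 : ℝ) ^ l * (Nat.factorial l) * (n.choose l) * (m.choose l) *
              (2 * r) ^ (n + m - 2 * l) :=
  stmt3_general n m r
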